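/- arXiv:2409.03050 — 8 statements merged into one kernel-verified Lean document; each statement's English description precedes it below -/
import Mathlib

section
/- The function x ↦ sin²(x)/x² is strictly decreasing on the interval (0, π). -/
open Real

lemma key {x : ℝ} (hx : x ∈ Set.Ioo 0 Real.pi) : x * Real.cos x - Real.sin x < 0 := by
  obtain ⟨h0, hpi⟩ := hx
  have hs : 0 < Real.sin x := Real.sin_pos_of_pos_of_lt_pi h0 hpi
  rcases le_or_gt (Real.cos x) 0 with hc | hc
  · nlinarith
  · have hx2 : x < Real.pi / 2 := by
      by_contra h
      push_neg at h
      have := Real.cos_nonpos_of_pi_div_two_le_of_le h (by linarith [Real.pi_pos])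
      linarith
    have := Real.lt_tan h0 hx2
    rw [Real.tan_eq_sin_div_cos, lt_div_iff₀ hc] at this
    linarith

lemma sin_div_strictAntiOn :
    StrictAntiOn (fun x : ℝ => Real.sin x / x) (Set.Ioo 0 Real.pi) := by
  have hconv : Convex ℝ (Set.Ioo (0:ℝ) Real.pi) := convex_Ioo _ _
  apply strictAntiOn_of_deriv_neg hconv
  · apply ContinuousOn.div Real.continuous_sin.continuousOn continuousOn_id
    intro x hx; exact ne_of_gt hx.1
  · intro x hx
    rw [interior_Ioo] at hx
    have hx0 : x ≠ 0 := ne_of_gt hx.1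
    have : deriv (fun x : ℝ => Real.sin x / x) x
        = (Real.cos x * x - Real.sin x * 1) / x ^ 2 := by
      have := deriv_div (c := Real.sin) (d := fun x : ℝ => x)
        (Real.differentiable_sin x) differentiableAt_id hx0
      simpa [Real.deriv_sin, Pi.div_def] using this
    rw [this]
    have := key hx
    have hx2 : (0:ℝ) < x ^ 2 := by positivity
    apply div_neg_of_neg_of_pos _ hx2
    nlinarith

theorem sin_sq_div_sq_strictAntiOn :
    StrictAntiOn (fun x : ℝ => Real.sin x ^ 2 / x ^ 2) (Set.Ioo 0 Real.pi) := by
  intro x hx y hy hxy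
  have h1 := sin_div_strictAntiOn hx hy hxy
  have hsy : 0 < Real.sin y / y :=
    div_pos (Real.sin_pos_of_pos_of_lt_pi hy.1 hy.2) hy.1
  have : (Real.sin y / y) ^ 2 < (Real.sin x / x) ^ 2 := by nlinarith
  simpa [div_pow] using this
end

section
/- For fixed t and Θ₁ with 0 < t < Θ₁, the function x ↦ sin²(x)/sin²(x·t/Θ₁) is strictly decreasing on (0, π/2). -/
open Real Set

private lemma hasDerivAt_N (c x : ℝ) :
    HasDerivAt (fun y : ℝ => c * Real.cos (c * y) * Real.sin y - Real.sin (c * y) * Real.cos y)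
      ((1 - c ^ 2) * (Real.sin (c * x) * Real.sin x)) x := by
  have h1 : HasDerivAt (fun y : ℝ => Real.cos (c * y)) (-Real.sin (c * x) * c) x := by
    exact ((Real.hasDerivAt_cos (c * x)).comp x ((hasDerivAt_id x).const_mul c)).congr_deriv (by simp)
  have h2 : HasDerivAt (fun y : ℝ => Real.sin (c * y)) (Real.cos (c * x) * c) x := by
    exact ((Real.hasDerivAt_sin (c * x)).comp x ((hasDerivAt_id x).const_mul c)).congr_deriv (by simp)
  have h := ((h1.const_mul c).mul (Real.hasDerivAt_sin x)).sub
    (h2.mul (Real.hasDerivAt_cos x))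
  refine h.congr_deriv ?_
  ring

private lemma N_pos (c : ℝ) (hc0 : 0 < c) (hc1 : c < 1) {x : ℝ}
    (hx : x ∈ Set.Ioo 0 (Real.pi / 2)) :
    0 < c * Real.cos (c * x) * Real.sin x - Real.sin (c * x) * Real.cos x := by
  set N : ℝ → ℝ := fun y => c * Real.cos (c * y) * Real.sin y - Real.sin (c * y) * Real.cos y
  have hmono : StrictMonoOn N (Set.Icc 0 (Real.pi / 2)) := by
    apply strictMonoOn_of_deriv_pos (convex_Icc _ _)
    · exact (Continuous.sub (by continuity) (by continuity)).continuousOn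
    · intro y hy
      rw [interior_Icc] at hy
      rw [(hasDerivAt_N c y).deriv]
      have hy1 : 0 < Real.sin y := Real.sin_pos_of_pos_of_lt_pi hy.1
        (hy.2.trans_le (by linarith [Real.pi_pos]))
      have hcyy : c * y < y := by nlinarith [hy.1]
      have hcy : 0 < Real.sin (c * y) := Real.sin_pos_of_pos_of_lt_pi (mul_pos hc0 hy.1)
        (by nlinarith [Real.pi_pos, hy.2])
      have h1c : 0 < 1 - c ^ 2 := by nlinarith
      exact mul_pos h1c (mul_pos hcy hy1)
  have h0 : N 0 = 0 := by simp [N]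
  have := hmono (Set.left_mem_Icc.2 (by linarith [Real.pi_pos]))
    ⟨hx.1.le, hx.2.le⟩ hx.1
  rw [h0] at this
  exact this

theorem sin_sq_ratio_strictAntiOn (t Θ₁ : ℝ) (ht : 0 < t) (htΘ : t < Θ₁) :
    StrictAntiOn (fun x : ℝ => Real.sin x ^ 2 / Real.sin (x * t / Θ₁) ^ 2)
      (Set.Ioo 0 (Real.pi / 2)) := by
  have hΘ : 0 < Θ₁ := ht.trans htΘ
  set c : ℝ := t / Θ₁ with hc
  have hc0 : 0 < c := div_pos ht hΘ
  have hc1 : c < 1 := (div_lt_one hΘ).2 htΘ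
  -- g(x) = sin(cx)/sin x is strictly increasing on Ioo 0 (π/2)
  have key : StrictMonoOn (fun x : ℝ => Real.sin (c * x) / Real.sin x)
      (Set.Ioo 0 (Real.pi / 2)) := by
    apply strictMonoOn_of_deriv_pos (convex_Ioo _ _)
    · apply ContinuousOn.div (by fun_prop) (by fun_prop)
      intro x hx
      exact (Real.sin_pos_of_pos_of_lt_pi hx.1
        (hx.2.trans_le (by linarith [Real.pi_pos]))).ne'
    · intro x hx
      rw [interior_Ioo] at hx
      have hsx : 0 < Real.sin x := Real.sin_pos_of_pos_of_lt_pi hx.1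
        (hx.2.trans_le (by linarith [Real.pi_pos]))
      have h2 : HasDerivAt (fun y : ℝ => Real.sin (c * y)) (Real.cos (c * x) * c) x := by
        exact ((Real.hasDerivAt_sin (c * x)).comp x ((hasDerivAt_id x).const_mul c)).congr_deriv (by simp)
      have hd : HasDerivAt (fun y : ℝ => Real.sin (c * y) / Real.sin y)
          ((Real.cos (c * x) * c * Real.sin x - Real.sin (c * x) * Real.cos x) /
            Real.sin x ^ 2) x := h2.div (Real.hasDerivAt_sin x) hsx.ne'
      rw [hd.deriv]
      have := N_pos c hc0 hc1 hx
      apply div_pos (by nlinarith [this]) (by positivity)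
  intro x hx y hy hxy
  have hPI := Real.pi_pos
  have hsx : 0 < Real.sin x := Real.sin_pos_of_pos_of_lt_pi hx.1 (hx.2.trans_le (by linarith))
  have hsy : 0 < Real.sin y := Real.sin_pos_of_pos_of_lt_pi hy.1 (hy.2.trans_le (by linarith))
  have ex : x * t / Θ₁ = c * x := by rw [hc]; ring
  have ey : y * t / Θ₁ = c * y := by rw [hc]; ring
  have hcxx : c * x < x := by nlinarith [hx.1]
  have hcyy : c * y < y := by nlinarith [hy.1]
  have hscx : 0 < Real.sin (x * t / Θ₁) := by
    rw [ex]
    exact Real.sin_pos_of_pos_of_lt_pi (mul_pos hc0 hx.1) (by nlinarith [hx.2])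
  have hscy : 0 < Real.sin (y * t / Θ₁) := by
    rw [ey]
    exact Real.sin_pos_of_pos_of_lt_pi (mul_pos hc0 hy.1) (by nlinarith [hy.2])
  have hgxy := key hx hy hxy
  simp only [← ex, ← ey] at hgxy
  rw [div_lt_div_iff₀ hsx hsy] at hgxy
  simp only
  rw [div_lt_div_iff₀ (by positivity) (by positivity)]
  nlinarith [mul_pos hscx hsy, mul_pos hscy hsx]
end

section
/- For fixed t and Θ₁ with 0 < t < Θ₁, the function x ↦ sinh²(x)/sinh²(x·t/Θ₁) is strictly increasing on (0, ∞). -/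
open Real Set

lemma aux_sinh_lt_mul_cosh : ∀ s : ℝ, 0 < s → Real.sinh s < s * Real.cosh s := by
  have h : StrictMonoOn (fun s : ℝ => s * Real.cosh s - Real.sinh s) (Set.Ici 0) := by
    apply strictMonoOn_of_deriv_pos (convex_Ici 0)
    · exact (Continuous.sub (continuous_id.mul Real.continuous_cosh) Real.continuous_sinh).continuousOn
    · intro s hs
      rw [interior_Ici] at hs
      have hd : HasDerivAt (fun s : ℝ => s * Real.cosh s - Real.sinh s) (s * Real.sinh s) s := by
        have := ((hasDerivAt_id s).fun_mul (Real.hasDerivAt_cosh s)).fun_sub (Real.hasDerivAt_sinh s)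
        exact this.congr_deriv (by simp [id_eq])
      rw [hd.deriv]
      exact mul_pos hs (Real.sinh_pos_iff.2 hs)
  intro s hs
  have := h Set.self_mem_Ici (Set.mem_Ici.mpr hs.le) hs
  simpa using this

lemma aux_sinh_div_mono : StrictMonoOn (fun s : ℝ => Real.sinh s / s) (Set.Ioi 0) := by
  apply strictMonoOn_of_deriv_pos (convex_Ioi 0)
  · exact Real.continuous_sinh.continuousOn.div continuousOn_id fun x hx => ne_of_gt hx
  · intro s hs
    rw [interior_Ioi] at hs
    have hd : HasDerivAt (fun s : ℝ => Real.sinh s / s)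
        ((Real.cosh s * s - Real.sinh s * 1) / s ^ 2) s :=
      (Real.hasDerivAt_sinh s).div (hasDerivAt_id s) (ne_of_gt hs)
    rw [hd.deriv]
    apply div_pos
    · have := aux_sinh_lt_mul_cosh s hs
      nlinarith
    · exact pow_pos hs 2

lemma aux_mul_sinh (a b : ℝ) (ha : 0 < a) (hab : a < b) : b * Real.sinh a < a * Real.sinh b := by
  have := aux_sinh_div_mono (Set.mem_Ioi.mpr ha) (Set.mem_Ioi.mpr (ha.trans hab)) hab
  rw [div_lt_div_iff₀ ha (ha.trans hab)] at this
  linarith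

lemma aux_key (u v : ℝ) (hv : 0 < v) (hvu : v < u) :
    v * Real.cosh v * Real.sinh u < u * Real.cosh u * Real.sinh v := by
  have hab : (0:ℝ) < u - v := by linarith
  have h := aux_mul_sinh (u - v) (u + v) hab (by linarith)
  rw [Real.sinh_add, Real.sinh_sub] at h
  nlinarith [h]

theorem sinh_sq_ratio_strictMonoOn (t Θ₁ : ℝ) (ht : 0 < t) (htΘ : t < Θ₁) :
    StrictMonoOn (fun x : ℝ => Real.sinh x ^ 2 / Real.sinh (x * t / Θ₁) ^ 2)
      (Set.Ioi 0) := by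
  have hΘ : 0 < Θ₁ := ht.trans htΘ
  have hvpos : ∀ x : ℝ, 0 < x → 0 < x * t / Θ₁ := fun x hx => by positivity
  apply strictMonoOn_of_deriv_pos (convex_Ioi 0)
  · apply ContinuousOn.div
    · exact (Real.continuous_sinh.pow 2).continuousOn
    · exact ((Real.continuous_sinh.comp (by continuity)).pow 2).continuousOn
    · intro x hx
      exact ne_of_gt (pow_pos (Real.sinh_pos_iff.2 (hvpos x hx)) 2)
  · intro x hx
    rw [interior_Ioi] at hx
    set v := x * t / Θ₁ with hv
    have hv0 : 0 < v := hvpos x hx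
    have hvx : v < x := by
      rw [hv, div_lt_iff₀ hΘ]
      nlinarith [mul_lt_mul_of_pos_left htΘ (Set.mem_Ioi.mp hx)]
    have hsx : 0 < Real.sinh x := Real.sinh_pos_iff.2 (hv0.trans hvx)
    have hsv : 0 < Real.sinh v := Real.sinh_pos_iff.2 hv0
    have hinner : HasDerivAt (fun x : ℝ => x * t / Θ₁) (t / Θ₁) x := by
      have := ((hasDerivAt_id x).mul_const t).div_const Θ₁
      simpa using this
    have hden : HasDerivAt (fun x : ℝ => Real.sinh (x * t / Θ₁) ^ 2)
        (2 * Real.sinh v ^ 1 * (Real.cosh v * (t / Θ₁))) x := by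
      exact (((Real.hasDerivAt_sinh v).comp x hinner).pow 2)
    have hnum : HasDerivAt (fun x : ℝ => Real.sinh x ^ 2)
        (2 * Real.sinh x ^ 1 * Real.cosh x) x :=
      (Real.hasDerivAt_sinh x).pow 2
    have hd := hnum.fun_div hden (ne_of_gt (pow_pos hsv 2))
    rw [hd.deriv]
    apply div_pos
    · have hkey := aux_key x v hv0 hvx
      have hx0 : 0 < x := hv0.trans hvx
      have h3 : Real.cosh v * (t / Θ₁) * Real.sinh x < Real.cosh x * Real.sinh v := by
        rw [mul_comm (Real.cosh v) (t / Θ₁), mul_assoc, div_mul_eq_mul_div, div_lt_iff₀ hΘ]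
        have h2 : v * Θ₁ = x * t := by rw [hv]; field_simp
        have h4 : v * Θ₁ * (Real.cosh v * Real.sinh x) = x * t * (Real.cosh v * Real.sinh x) := by
          rw [h2]
        nlinarith [mul_lt_mul_of_pos_right hkey hΘ, h4, hx0]
      nlinarith [mul_pos hsx hsv]
    · positivity
end

section
/- Let n ≥ 3 be an integer. For every y ∈ (0, π/2), the quantity (n−1)·cot²(y) − (n−3)·y·cot(y)·csc²(y) − 2·csc²(y) is negative, where cot(y) = cos(y)/sin(y) and csc(y) = 1/sin(y). -/
theorem cot_csc_expression_neg (n : ℕ) (hn : 3 ≤ n) (y : ℝ)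
    (hy : y ∈ Set.Ioo 0 (Real.pi / 2)) :
    (n - 1 : ℝ) * (Real.cos y / Real.sin y) ^ 2
      - (n - 3 : ℝ) * y * (Real.cos y / Real.sin y) * (1 / Real.sin y) ^ 2
      - 2 * (1 / Real.sin y) ^ 2 < 0 := by
  obtain ⟨hy0, hy2⟩ := hy
  have hs : 0 < Real.sin y := Real.sin_pos_of_pos_of_lt_pi hy0
    (hy2.trans (by linarith [Real.pi_pos]))
  have hc : 0 < Real.cos y := Real.cos_pos_of_mem_Ioo ⟨by linarith [Real.pi_pos], hy2⟩
  have hc1 : Real.cos y ≤ 1 := Real.cos_le_one y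
  have hsy : Real.sin y < y := Real.sin_lt hy0
  have hn3 : (3 : ℝ) ≤ (n : ℝ) := by exact_mod_cast hn
  have key : (n - 1 : ℝ) * Real.cos y ^ 2 * Real.sin y
      - (n - 3 : ℝ) * y * Real.cos y - 2 * Real.sin y < 0 := by
    have h1 : ((n:ℝ) - 3) * Real.cos y * (Real.sin y * Real.cos y - y) ≤ 0 :=
      mul_nonpos_of_nonneg_of_nonpos
        (mul_nonneg (by linarith) hc.le) (by nlinarith)
    have h2 : 0 < Real.sin y ^ 3 := pow_pos hs 3
    have hp : Real.sin y ^ 2 + Real.cos y ^ 2 = 1 := Real.sin_sq_add_cos_sq y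
    nlinarith [h1, h2, hp, hs]
  have heq : (n - 1 : ℝ) * (Real.cos y / Real.sin y) ^ 2
      - (n - 3 : ℝ) * y * (Real.cos y / Real.sin y) * (1 / Real.sin y) ^ 2
      - 2 * (1 / Real.sin y) ^ 2
      = ((n - 1 : ℝ) * Real.cos y ^ 2 * Real.sin y
        - (n - 3 : ℝ) * y * Real.cos y - 2 * Real.sin y) / Real.sin y ^ 3 := by
    field_simp
  rw [heq]
  exact div_neg_of_neg_of_pos key (pow_pos hs 3)
end

section
/- Let n ≥ 3 be an integer and let c > 0 be a real constant. The function x ↦ x²·((n−1)·cot²(c·x) − 2·csc²(c·x)) is strictly decreasing on the interval (0, π/(2c)), where cot(y) = cos(y)/sin(y) and csc(y) = 1/sin(y). -/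
theorem sq_mul_cot_csc_strictAntiOn (n : ℕ) (hn : 3 ≤ n) (c : ℝ) (hc : 0 < c) :
    StrictAntiOn
      (fun x : ℝ => x ^ 2 *
        ((n - 1 : ℝ) * (Real.cos (c * x) / Real.sin (c * x)) ^ 2
          - 2 * (1 / Real.sin (c * x)) ^ 2))
      (Set.Ioo 0 (Real.pi / (2 * c))) := by
  have hn3 : (3:ℝ) ≤ (n:ℝ) := by exact_mod_cast hn
  set g : ℝ → ℝ := fun x => ((n:ℝ) - 3) * x^2 / Real.sin (c*x)^2 - ((n:ℝ)-1) * x^2 with hg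
  have hmem : ∀ x ∈ Set.Ioo (0:ℝ) (Real.pi/(2*c)),
      0 < c*x ∧ c*x < Real.pi/2 ∧ 0 < Real.sin (c*x) := by
    intro x hx
    have h1 : 0 < c*x := mul_pos hc hx.1
    have h2 : c*x < Real.pi/2 := by
      have h := hx.2
      have : c * x < c * (Real.pi/(2*c)) := by gcongr
      calc c*x < c * (Real.pi/(2*c)) := this
        _ = Real.pi/2 := by field_simp
    exact ⟨h1, h2, Real.sin_pos_of_pos_of_lt_pi h1 (by linarith [Real.pi_pos])⟩
  have hG : StrictAntiOn g (Set.Ioo 0 (Real.pi/(2*c))) := by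
    apply strictAntiOn_of_deriv_neg (convex_Ioo _ _)
    · apply ContinuousOn.sub
      · apply ContinuousOn.div (by fun_prop) (by fun_prop)
        intro x hx
        exact ne_of_gt (pow_pos (hmem x hx).2.2 2)
      · fun_prop
    · intro x hx
      rw [interior_Ioo] at hx
      obtain ⟨ht, ht2, hs⟩ := hmem x hx
      have hco : 0 < Real.cos (c*x) :=
        Real.cos_pos_of_mem_Ioo ⟨by linarith [Real.pi_pos], ht2⟩
      -- key inequality
      have hsc : Real.sin (c*x) * Real.cos (c*x) < c*x := by
        have h2t := Real.sin_lt (show (0:ℝ) < 2*(c*x) by linarith)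
        rw [Real.sin_two_mul] at h2t
        linarith
      have hkey : Real.sin (c*x) - (c*x) * Real.cos (c*x) < Real.sin (c*x)^3 := by
        have hpy := Real.sin_sq_add_cos_sq (c*x)
        nlinarith [mul_pos hs hco]
      -- derivative computation
      have hsin : HasDerivAt (fun y => Real.sin (c*y)) (Real.cos (c*x) * c) x := by
        have := (Real.hasDerivAt_sin (c*x)).comp x ((hasDerivAt_id x).const_mul c)
        simpa [Function.comp_def] using this
      have hsin2 := hsin.pow 2
      have hnum : HasDerivAt (fun y : ℝ => ((n:ℝ)-3) * y^2) (((n:ℝ)-3)*(2*x)) x := by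
        simpa using (hasDerivAt_pow 2 x).const_mul ((n:ℝ)-3)
      have hsq : HasDerivAt (fun y : ℝ => ((n:ℝ)-1) * y^2) (((n:ℝ)-1)*(2*x)) x := by
        simpa using (hasDerivAt_pow 2 x).const_mul ((n:ℝ)-1)
      have hdiv := (hnum.div hsin2 (ne_of_gt (pow_pos hs 2))).sub hsq
      have hderiv : deriv g x = (((n:ℝ)-3)*(2*x) * Real.sin (c*x)^2
          - ((n:ℝ)-3)*x^2 * (2 * Real.sin (c*x)^1 * (Real.cos (c*x) * c))) / (Real.sin (c*x)^2)^2
          - ((n:ℝ)-1)*(2*x) := hdiv.deriv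
      rw [hderiv]
      have hs4 : 0 < (Real.sin (c*x)^2)^2 := pow_pos (pow_pos hs 2) 2
      rw [sub_neg, div_lt_iff₀ hs4]
      have hfac : ((n:ℝ)-3) * (Real.sin (c*x) - (c*x) * Real.cos (c*x))
          ≤ ((n:ℝ)-3) * Real.sin (c*x)^3 :=
        mul_le_mul_of_nonneg_left (le_of_lt hkey) (by linarith)
      nlinarith [mul_pos hx.1 hs, mul_pos (mul_pos hx.1 hs) (pow_pos hs 3),
        mul_le_mul_of_nonneg_left hfac (le_of_lt (mul_pos hx.1 hs)),
        pow_pos hs 3, pow_pos hs 4]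
  intro a ha b hb hab
  have heq : ∀ x ∈ Set.Ioo (0:ℝ) (Real.pi/(2*c)),
      x ^ 2 * ((n - 1 : ℝ) * (Real.cos (c * x) / Real.sin (c * x)) ^ 2
          - 2 * (1 / Real.sin (c * x)) ^ 2) = g x := by
    intro x hx
    have hs := (hmem x hx).2.2
    have hpy := Real.sin_sq_add_cos_sq (c*x)
    have hc2 : Real.cos (c*x)^2 = 1 - Real.sin (c*x)^2 := by linarith
    simp only [hg, div_pow, one_pow, hc2]
    field_simp
    have : Real.sin (x*c) ≠ 0 := by rw [mul_comm]; exact hs.ne'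
    field_simp
    ring
  simp only
  rw [heq a ha, heq b hb]
  exact hG ha hb hab
end

section
/- Let n ≥ 3 be an integer. The function y ↦ y²·((n−1)·coth²(y) − 2·csch²(y)) is strictly increasing on (0, ∞), where coth(y) = cosh(y)/sinh(y) and csch(y) = 1/sinh(y). -/
/-!
Since `csch² = coth² - 1`, the function equals `(c - 2) (y coth y)² + 2 y²` with
`c = n - 1 ≥ 2`. Both summands increase on `(0, ∞)`: the second strictly, the first because `y coth y` is positive
and increasing there, its derivative having numerator `sinh y cosh y - y = (sinh 2y - 2y) / 2 > 0`.
-/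

open Real Set

lemma strictMonoOn_mul_cosh_div_sinh :
    StrictMonoOn (fun y : ℝ => y * cosh y / sinh y) (Ioi 0) := by
  refine strictMonoOn_of_deriv_pos (convex_Ioi 0) ?_ fun x hx => ?_
  · exact (continuous_id.mul continuous_cosh).continuousOn.div continuous_sinh.continuousOn
      fun x hx => (sinh_pos_iff.2 hx).ne'
  rw [interior_Ioi] at hx
  have hsinh : 0 < sinh x := sinh_pos_iff.2 hx
  have hderiv : HasDerivAt (fun y => y * cosh y / sinh y)
      (((1 * cosh x + x * sinh x) * sinh x - x * cosh x * cosh x) / sinh x ^ 2) x :=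
    ((hasDerivAt_id' x).mul (hasDerivAt_cosh x)).div (hasDerivAt_sinh x) hsinh.ne'
  have hnum : (1 * cosh x + x * sinh x) * sinh x - x * cosh x * cosh x =
      (sinh (2 * x) - 2 * x) / 2 := by
    rw [sinh_two_mul]; linear_combination (-x) * cosh_sq x
  have hpos : 2 * x < sinh (2 * x) := self_lt_sinh_iff.2 (by linarith [mem_Ioi.1 hx])
  rw [hderiv.deriv, hnum]
  positivity [sub_pos.2 hpos]

lemma sq_mul_coth_csch_eq (c : ℝ) {y : ℝ} (hy : sinh y ≠ 0) :
    y ^ 2 * (c * (cosh y / sinh y) ^ 2 - 2 * (1 / sinh y) ^ 2) =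
      (c - 2) * (y * cosh y / sinh y) ^ 2 + 2 * y ^ 2 := by
  field_simp
  linear_combination 2 * y ^ 2 * cosh_sq y

lemma strictMonoOn_sq_mul_coth_csch {c : ℝ} (hc : 2 ≤ c) :
    StrictMonoOn (fun y : ℝ => y ^ 2 * (c * (cosh y / sinh y) ^ 2 - 2 * (1 / sinh y) ^ 2))
      (Ioi 0) := by
  have hsq : StrictMonoOn (fun y : ℝ => 2 * y ^ 2) (Ioi 0) := fun a ha b _ hab => by
    have : a ^ 2 < b ^ 2 := pow_lt_pow_left₀ hab (le_of_lt ha) two_ne_zero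
    linarith
  have hcoth : MonotoneOn (fun y : ℝ => (c - 2) * (y * cosh y / sinh y) ^ 2) (Ioi 0) :=
    fun a ha b hb hab => by
      have ha' : 0 < a * cosh a / sinh a := div_pos (mul_pos ha (cosh_pos a)) (sinh_pos_iff.2 ha)
      exact mul_le_mul_of_nonneg_left
        (pow_le_pow_left₀ ha'.le (strictMonoOn_mul_cosh_div_sinh.monotoneOn ha hb hab) 2)
        (by linarith)
  exact (hcoth.add_strictMono hsq).congr fun y hy =>
    (sq_mul_coth_csch_eq c (sinh_pos_iff.2 hy).ne').symm

theorem sq_mul_coth_csch_strictMonoOn (n : ℕ) (hn : 3 ≤ n) :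
    StrictMonoOn
      (fun y : ℝ => y ^ 2 *
        ((n - 1 : ℝ) * (Real.cosh y / Real.sinh y) ^ 2
          - 2 * (1 / Real.sinh y) ^ 2))
      (Set.Ioi 0) :=
  strictMonoOn_sq_mul_coth_csch (by linarith [(Nat.ofNat_le_cast.2 hn : (3 : ℝ) ≤ n)])
end

section
/- Let n ≥ 2 be an integer. The function Θ ↦ (1/Θⁿ)·∫₀^Θ sinh(θ)^{n−1} dθ is strictly increasing for Θ ∈ (0, ∞). -/
/-!
Substituting `θ = Θ t` turns the ratio into `∫₀¹ t ^ (n - 1) * (sinh (Θ t) / (Θ t)) ^ (n - 1) dt`,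
whose integrand increases with `Θ` because `sinh x / x` is the slope of a secant of the strictly
convex function `sinh` through the origin.
-/

open Real Set intervalIntegral

theorem strictConvexOn_sinh : StrictConvexOn ℝ (Ici 0) sinh := by
  refine strictConvexOn_of_deriv2_pos (convex_Ici 0) continuous_sinh.continuousOn fun x hx => ?_
  rw [interior_Ici] at hx
  simpa [Real.deriv_sinh, Real.deriv_cosh] using hx

theorem strictMonoOn_sinh_div_self : StrictMonoOn (fun x => sinh x / x) (Ioi 0) := by
  intro x hx y hy hxy
  simpa using strictConvexOn_sinh.secant_strict_mono self_mem_Ici (mem_Ici.2 hx.le)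
    (mem_Ici.2 hy.le) hx.ne' hy.ne' hxy

theorem integral_div_pow_succ_eq_integral_comp_mul (f : ℝ → ℝ) (k : ℕ) {Θ : ℝ} (hΘ : Θ ≠ 0) :
    (∫ θ in 0..Θ, f θ) / Θ ^ (k + 1) = ∫ t in 0..1, f (Θ * t) / Θ ^ k := by
  rw [integral_div, integral_comp_mul_left f hΘ, mul_zero, mul_one, smul_eq_mul, pow_succ]
  field_simp

theorem strictMonoOn_integral_div_pow_succ {f : ℝ → ℝ} {k : ℕ} (hf : Continuous f)
    (hmono : StrictMonoOn (fun x => f x / x ^ k) (Ioi 0)) :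
    StrictMonoOn (fun Θ => (∫ θ in 0..Θ, f θ) / Θ ^ (k + 1)) (Ioi 0) := by
  intro a (ha : 0 < a) b (hb : 0 < b) hab
  have hlt : ∀ t : ℝ, 0 < t → f (a * t) / a ^ k < f (b * t) / b ^ k := by
    intro t ht
    have hscale : ∀ c : ℝ, c ≠ 0 → f (c * t) / c ^ k = t ^ k * (f (c * t) / (c * t) ^ k) := by
      intro c hc
      rw [mul_pow]
      field_simp
    rw [hscale a ha.ne', hscale b hb.ne']
    exact mul_lt_mul_of_pos_left
      (hmono (mul_pos ha ht) (mul_pos hb ht) (mul_lt_mul_of_pos_right hab ht)) (pow_pos ht k)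
  have hcont : ∀ c : ℝ, ContinuousOn (fun t => f (c * t) / c ^ k) (Icc 0 1) := fun c =>
    (hf.comp (continuous_const_mul c)).continuousOn.div_const _
  simp only [integral_div_pow_succ_eq_integral_comp_mul f k ha.ne',
    integral_div_pow_succ_eq_integral_comp_mul f k hb.ne']
  exact integral_lt_integral_of_continuousOn_of_le_of_exists_lt zero_lt_one (hcont a) (hcont b)
    (fun t ht => (hlt t ht.1).le) ⟨1, right_mem_Icc.2 zero_le_one, hlt 1 one_pos⟩

theorem ball_volume_ratio_strictMonoOn (n : ℕ) (hn : 2 ≤ n) :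
    StrictMonoOn
      (fun Θ : ℝ => (1 / Θ ^ n) * ∫ θ in (0 : ℝ)..Θ, Real.sinh θ ^ (n - 1))
      (Set.Ioi 0) := by
  obtain ⟨k, rfl⟩ : ∃ k, n = k + 1 := ⟨n - 1, by omega⟩
  have hk : k ≠ 0 := by omega
  have hmono : StrictMonoOn (fun x => sinh x ^ k / x ^ k) (Ioi 0) := by
    intro x (hx : 0 < x) y hy hxy
    simp only [← div_pow]
    exact pow_lt_pow_left₀ (strictMonoOn_sinh_div_self hx hy hxy)
      (div_pos (sinh_pos_iff.2 hx) hx).le hk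
  simpa only [one_div_mul_eq_div, Nat.add_sub_cancel] using
    strictMonoOn_integral_div_pow_succ (f := fun θ => sinh θ ^ k) (continuous_sinh.pow k) hmono
end

section
/- Let n = 3 and suppose λ₁(Θ) = π²/Θ² − 1 for Θ ∈ (0, π) (the first Dirichlet eigenvalue of the spherical cap of aperture Θ in S³). Then Θ ↦ (π²/Θ² − 1)·sin²(Θ) is strictly decreasing on (0, π). -/
/-!
On `(0, π)` we have `(π²/Θ² - 1) sin² Θ = (π² - Θ²) (sin Θ / Θ)²`, a product of two positive,
strictly decreasing factors.
-/

open Real Set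

/-- `sin x / x` is the slope of the chord of the strictly concave `sin` from `0` to `x`. -/
lemma sin_div_self_strictAntiOn : StrictAntiOn (fun x : ℝ => sin x / x) (Ioc 0 π) := by
  intro x hx y hy hxy
  simpa using strictConcaveOn_sin_Icc.secant_strict_mono (left_mem_Icc.2 pi_pos.le)
    (Ioc_subset_Icc_self hx) (Ioc_subset_Icc_self hy) hx.1.ne' hy.1.ne' hxy

lemma StrictAntiOn.mul_of_nonneg {α β : Type*} [Preorder α] [Semiring β] [PartialOrder β]
    [IsStrictOrderedRing β] {f g : α → β} {s : Set α} (hf : StrictAntiOn f s)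
    (hg : StrictAntiOn g s) (hf₀ : ∀ x ∈ s, 0 ≤ f x) (hg₀ : ∀ x ∈ s, 0 ≤ g x) :
    StrictAntiOn (fun x => f x * g x) s :=
  fun _ hx _ hy hxy => mul_lt_mul'' (hf hx hy hxy) (hg hx hy hxy) (hf₀ _ hy) (hg₀ _ hy)

theorem sphere_three_dim_scaled_eigenvalue_strictAntiOn :
    StrictAntiOn
      (fun Θ : ℝ => (Real.pi ^ 2 / Θ ^ 2 - 1) * Real.sin Θ ^ 2)
      (Set.Ioo 0 Real.pi) := by
  have hsinc₀ : ∀ x ∈ Ioo 0 π, 0 < sin x / x :=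
    fun x hx => div_pos (sin_pos_of_pos_of_lt_pi hx.1 hx.2) hx.1
  have hsinc : StrictAntiOn (fun x => sin x / x) (Ioo 0 π) :=
    sin_div_self_strictAntiOn.mono Ioo_subset_Ioc_self
  have hsinc_sq : StrictAntiOn (fun x => (sin x / x) ^ 2) (Ioo 0 π) :=
    fun x hx y hy hxy => pow_lt_pow_left₀ (hsinc hx hy hxy) (hsinc₀ y hy).le two_ne_zero
  have hgap : StrictAntiOn (fun x => π ^ 2 - x ^ 2) (Ioo 0 π) :=
    fun x hx y _ hxy => by nlinarith [hx.1]
  refine (hgap.mul_of_nonneg hsinc_sq (fun x hx => ?_) (fun x _ => sq_nonneg _)).congr ?_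
  · nlinarith [hx.1, hx.2]
  · intro x hx
    field_simp [hx.1.ne']
end
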